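/- Every (K, M)-PTF f : X → {±1} with X ⊆ [−1,1]ⁿ is also a (K, 2M, B, ξ)-PTF, for ξ = 1/(2(n+1)^{(K+1)/2} K M) and B = 2(n+1)^{K/2} M. -/

import Mathlib

open MvPolynomial

noncomputable def coeffNorm {n : ℕ} (p : MvPolynomial (Fin n) ℝ) : ℝ :=
  Real.sqrt (∑ m ∈ p.support, (coeff m p) ^ 2)

-- product difference lemma
lemma my_prod_sub_prod_abs_le {ι : Type*} (s : Finset ι) (a b : ι → ℝ)
    (ha : ∀ i ∈ s, |a i| ≤ 1) (hb : ∀ i ∈ s, |b i| ≤ 1) :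
    |∏ i ∈ s, a i - ∏ i ∈ s, b i| ≤ ∑ i ∈ s, |a i - b i| := by
  classical
  induction s using Finset.cons_induction with
  | empty => simp
  | cons j s hj ih =>
    rw [Finset.prod_cons, Finset.prod_cons, Finset.sum_cons]
    have hprodb : |∏ i ∈ s, b i| ≤ 1 := by
      rw [Finset.abs_prod]
      exact Finset.prod_le_one (fun i _ => abs_nonneg _)
        (fun i hi => hb i (Finset.mem_cons_of_mem hi))
    have ih' := ih (fun i hi => ha i (Finset.mem_cons_of_mem hi))
      (fun i hi => hb i (Finset.mem_cons_of_mem hi))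
    have haj := ha j (Finset.mem_cons_self _ _)
    calc |a j * ∏ i ∈ s, a i - b j * ∏ i ∈ s, b i|
        = |a j * (∏ i ∈ s, a i - ∏ i ∈ s, b i) + (a j - b j) * ∏ i ∈ s, b i| := by
          ring_nf
      _ ≤ |a j * (∏ i ∈ s, a i - ∏ i ∈ s, b i)| + |(a j - b j) * ∏ i ∈ s, b i| :=
          abs_add_le _ _
      _ = |a j| * |∏ i ∈ s, a i - ∏ i ∈ s, b i| + |a j - b j| * |∏ i ∈ s, b i| := by
          rw [abs_mul, abs_mul]
      _ ≤ 1 * (∑ i ∈ s, |a i - b i|) + |a j - b j| * 1 := by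
          gcongr
      _ = |a j - b j| + ∑ i ∈ s, |a i - b i| := by ring

lemma my_pow_sub_pow_abs_le (x u : ℝ) (hx : |x| ≤ 1) (hu : |u| ≤ 1) (k : ℕ) :
    |x ^ k - u ^ k| ≤ (k : ℝ) * |x - u| := by
  have := my_prod_sub_prod_abs_le (Finset.range k) (fun _ => x) (fun _ => u)
    (fun _ _ => hx) (fun _ _ => hu)
  simpa [mul_comm] using this

lemma my_card_support_le {n K : ℕ} (p : MvPolynomial (Fin n) ℝ)
    (hdeg : p.totalDegree ≤ K) : p.support.card ≤ (n + 1) ^ K := by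
  classical
  set pad : (Fin n →₀ ℕ) → Multiset (Option (Fin n)) := fun m =>
    (Finsupp.toMultiset m).map some +
      Multiset.replicate (K - Multiset.card (Finsupp.toMultiset m)) none with hpad
  have hcard : ∀ m ∈ p.support, Multiset.card (Finsupp.toMultiset m) ≤ K := by
    intro m hm
    rw [Finsupp.card_toMultiset]
    exact le_trans (MvPolynomial.le_totalDegree hm) hdeg
  have hpadcard : ∀ m ∈ p.support, Multiset.card (pad m) = K := by
    intro m hm
    have := hcard m hm
    simp only [hpad, Multiset.card_add, Multiset.card_map, Multiset.card_replicate]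
    omega
  -- injection into functions Fin K → Option (Fin n)
  set φ : (Fin n →₀ ℕ) → (Fin K → Option (Fin n)) := fun m j =>
    (pad m).toList.getD j none with hφ
  have hlen : ∀ m ∈ p.support, (pad m).toList.length = K := by
    intro m hm
    rw [← Multiset.coe_card, Multiset.coe_toList]
    exact hpadcard m hm
  have hinj : Set.InjOn φ p.support := by
    intro m₁ h₁ m₂ h₂ heq
    have hl : (pad m₁).toList = (pad m₂).toList := by
      apply List.ext_getElem
      · rw [hlen m₁ h₁, hlen m₂ h₂]
      · intro i hi1 hi2
        have hiK : i < K := by rw [hlen m₁ h₁] at hi1; exact hi1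
        have := congrFun heq ⟨i, hiK⟩
        simp only [hφ] at this
        rwa [List.getD_eq_getElem _ _ hi1, List.getD_eq_getElem _ _ hi2] at this
    have hpadeq : pad m₁ = pad m₂ := by
      rw [← Multiset.coe_toList (pad m₁), ← Multiset.coe_toList (pad m₂), hl]
    have : Finsupp.toMultiset m₁ = Finsupp.toMultiset m₂ := by
      ext a
      have := congrArg (Multiset.count (some a)) hpadeq
      simpa [hpad, Multiset.count_map_eq_count' _ _ (Option.some_injective _),
        Multiset.count_replicate] using this
    have := congrArg Multiset.toFinsupp this
    rwa [Finsupp.toMultiset_toFinsupp, Finsupp.toMultiset_toFinsupp] at this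
  calc p.support.card ≤ (Finset.univ : Finset (Fin K → Option (Fin n))).card :=
        Finset.card_le_card_of_injOn φ (fun _ _ => Finset.mem_univ _) (by
          intro a ha b hb hab
          exact hinj (by simpa using ha) (by simpa using hb) hab)
    _ = (n + 1) ^ K := by
        simp [Fintype.card_fun]

lemma my_sum_abs_coeff_le {n K : ℕ} (p : MvPolynomial (Fin n) ℝ)
    (hdeg : p.totalDegree ≤ K) :
    ∑ m ∈ p.support, |coeff m p| ≤
      Real.sqrt ((((n : ℝ) + 1)) ^ K) * coeffNorm p := by
  have h1 : (∑ m ∈ p.support, |coeff m p|) ^ 2 ≤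
      (p.support.card : ℝ) * ∑ m ∈ p.support, (coeff m p) ^ 2 := by
    have := sq_sum_le_card_mul_sum_sq (s := p.support) (f := fun m => |coeff m p|)
    simpa [sq_abs] using this
  have h2 : ∑ m ∈ p.support, |coeff m p| ≤
      Real.sqrt ((p.support.card : ℝ) * ∑ m ∈ p.support, (coeff m p) ^ 2) := by
    have hnn : 0 ≤ ∑ m ∈ p.support, |coeff m p| :=
      Finset.sum_nonneg fun _ _ => abs_nonneg _
    nlinarith [Real.sq_sqrt (show (0:ℝ) ≤ (p.support.card : ℝ) *
        ∑ m ∈ p.support, (coeff m p) ^ 2 by positivity),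
      Real.sqrt_nonneg ((p.support.card : ℝ) * ∑ m ∈ p.support, (coeff m p) ^ 2)]
  refine h2.trans ?_
  rw [Real.sqrt_mul (by positivity)]
  unfold coeffNorm
  refine mul_le_mul_of_nonneg_right ?_ (Real.sqrt_nonneg _)
  · have := my_card_support_le p hdeg
    have : (p.support.card : ℝ) ≤ ((n : ℝ) + 1) ^ K := by
      calc (p.support.card : ℝ) ≤ ((n + 1 : ℕ) ^ K : ℕ) := by exact_mod_cast this
        _ = ((n : ℝ) + 1) ^ K := by push_cast; ring
    exact Real.sqrt_le_sqrt this

lemma my_eval_abs_le {n : ℕ} (p : MvPolynomial (Fin n) ℝ)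
    (u : Fin n → ℝ) (hu : ∀ i, |u i| ≤ 1) :
    |eval u p| ≤ ∑ m ∈ p.support, |coeff m p| := by
  rw [MvPolynomial.eval_eq]
  refine (Finset.abs_sum_le_sum_abs _ _).trans ?_
  apply Finset.sum_le_sum
  intro m _
  rw [abs_mul]
  have : |∏ i ∈ m.support, u i ^ m i| ≤ 1 := by
    rw [Finset.abs_prod]
    refine Finset.prod_le_one (fun i _ => abs_nonneg _) (fun i _ => ?_)
    rw [abs_pow]
    exact pow_le_one₀ (abs_nonneg _) (hu i)
  calc |coeff m p| * |∏ i ∈ m.support, u i ^ m i| ≤ |coeff m p| * 1 :=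
        mul_le_mul_of_nonneg_left this (abs_nonneg _)
    _ = |coeff m p| := mul_one _

lemma my_eval_sub_abs_le {n K : ℕ} (p : MvPolynomial (Fin n) ℝ)
    (hdeg : p.totalDegree ≤ K) (x u : Fin n → ℝ)
    (hx : ∀ i, |x i| ≤ 1) (hu : ∀ i, |u i| ≤ 1) (δ : ℝ) (hδ : 0 ≤ δ)
    (hd : ∀ i, |x i - u i| ≤ δ) :
    |eval x p - eval u p| ≤ (∑ m ∈ p.support, |coeff m p|) * ((K : ℝ) * δ) := by
  rw [MvPolynomial.eval_eq, MvPolynomial.eval_eq, ← Finset.sum_sub_distrib]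
  refine (Finset.abs_sum_le_sum_abs _ _).trans ?_
  rw [Finset.sum_mul]
  apply Finset.sum_le_sum
  intro m hm
  have habs : ∀ (v : Fin n → ℝ), (∀ i, |v i| ≤ 1) → ∀ i ∈ m.support, |v i ^ m i| ≤ 1 := by
    intro v hv i _
    rw [abs_pow]
    exact pow_le_one₀ (abs_nonneg _) (hv i)
  have key : |∏ i ∈ m.support, x i ^ m i - ∏ i ∈ m.support, u i ^ m i| ≤ (K : ℝ) * δ := by
    refine (my_prod_sub_prod_abs_le m.support _ _ (habs x hx) (habs u hu)).trans ?_
    calc ∑ i ∈ m.support, |x i ^ m i - u i ^ m i|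
        ≤ ∑ i ∈ m.support, (m i : ℝ) * δ := by
          refine Finset.sum_le_sum fun i _ => ?_
          exact (my_pow_sub_pow_abs_le (x i) (u i) (hx i) (hu i) (m i)).trans
            (mul_le_mul_of_nonneg_left (hd i) (Nat.cast_nonneg _))
      _ = ((∑ i ∈ m.support, m i : ℕ) : ℝ) * δ := by
          rw [← Finset.sum_mul]; push_cast; ring
      _ ≤ (K : ℝ) * δ := by
          gcongr
          have h := MvPolynomial.le_totalDegree hm
          have : (m.sum fun _ e => e) ≤ K := h.trans hdeg
          exact_mod_cast this
  calc |coeff m p * ∏ i ∈ m.support, x i ^ m i - coeff m p * ∏ i ∈ m.support, u i ^ m i|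
      = |coeff m p| * |∏ i ∈ m.support, x i ^ m i - ∏ i ∈ m.support, u i ^ m i| := by
        rw [← abs_mul, mul_sub]
    _ ≤ |coeff m p| * ((K : ℝ) * δ) :=
        mul_le_mul_of_nonneg_left key (abs_nonneg _)

theorem stmt15 {n K : ℕ} (hK : 1 ≤ K) (Xs : Set (Fin n → ℝ))
    (hXs : ∀ x ∈ Xs, ∀ i, |x i| ≤ 1)
    (f : (Fin n → ℝ) → ℝ) (hf : ∀ x ∈ Xs, f x = 1 ∨ f x = -1)
    (p : MvPolynomial (Fin n) ℝ) (M : ℝ) (hM : 0 < M)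
    (hdeg : p.totalDegree ≤ K) (hco : coeffNorm p ≤ M)
    (hptf : ∀ x ∈ Xs, 1 ≤ eval x p * f x) :
    ∃ q : MvPolynomial (Fin n) ℝ, q.totalDegree ≤ K ∧ coeffNorm q ≤ 2 * M ∧
      ∀ x ∈ Xs, ∀ u : Fin n → ℝ, (∀ i, |u i| ≤ 1) →
        (∀ i, |x i - u i| ≤ 1 / (2 * ((n : ℝ) + 1) ^ (((K : ℝ) + 1) / 2) * K * M)) →
        1 ≤ eval u q * f x ∧ eval u q * f x ≤ 2 * ((n : ℝ) + 1) ^ ((K : ℝ) / 2) * M := by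
  classical
  set A : ℝ := ((n : ℝ) + 1) ^ ((K : ℝ) / 2) with hAdef
  set R : ℝ := ((n : ℝ) + 1) ^ ((1 : ℝ) / 2) with hRdef
  have hn1 : (0:ℝ) < (n : ℝ) + 1 := by positivity
  have hApos : 0 < A := Real.rpow_pos_of_pos hn1 _
  have hRpos : 0 < R := Real.rpow_pos_of_pos hn1 _
  have hR1 : 1 ≤ R := Real.one_le_rpow (by linarith [Nat.cast_nonneg (α := ℝ) n]) (by norm_num)
  have hA1 : 1 ≤ A := Real.one_le_rpow (by linarith [Nat.cast_nonneg (α := ℝ) n]) (by positivity)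
  have hAsqrt : Real.sqrt (((n : ℝ) + 1) ^ K) = A := by
    rw [Real.sqrt_eq_rpow, ← Real.rpow_natCast ((n:ℝ)+1) K, ← Real.rpow_mul hn1.le]
    rw [hAdef]
    congr 1
    ring
  have hDsplit : ((n : ℝ) + 1) ^ (((K : ℝ) + 1) / 2) = A * R := by
    rw [hAdef, hRdef, ← Real.rpow_add hn1]
    congr 1
    ring
  have hKpos : (0:ℝ) < (K : ℝ) := by exact_mod_cast hK
  set δ : ℝ := 1 / (2 * ((n : ℝ) + 1) ^ (((K : ℝ) + 1) / 2) * K * M) with hδdef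
  have hδpos : 0 < δ := by
    rw [hδdef, hDsplit]
    positivity
  have hS : ∑ m ∈ p.support, |coeff m p| ≤ A * M := by
    calc ∑ m ∈ p.support, |coeff m p|
        ≤ Real.sqrt (((n : ℝ) + 1) ^ K) * coeffNorm p := my_sum_abs_coeff_le p hdeg
      _ = A * coeffNorm p := by rw [hAsqrt]
      _ ≤ A * M := mul_le_mul_of_nonneg_left hco hApos.le
  have hclaim : (A * M) * ((K : ℝ) * δ) ≤ 1 / 2 := by
    have heq : (A * M) * ((K : ℝ) * δ) = 1 / (2 * R) := by
      rw [hδdef, hDsplit]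
      field_simp
    rw [heq]
    rw [div_le_div_iff₀ (by positivity) (by norm_num)]
    linarith
  refine ⟨C 2 * p, ?_, ?_, ?_⟩
  · refine (MvPolynomial.totalDegree_mul _ _).trans ?_
    rw [MvPolynomial.totalDegree_C]
    simpa using hdeg
  · have hsupp : (C 2 * p).support = p.support := by
      ext m
      simp [MvPolynomial.mem_support_iff, MvPolynomial.coeff_C_mul]
    have hsum : ∑ m ∈ p.support, (coeff m (C 2 * p)) ^ 2
        = 4 * ∑ m ∈ p.support, (coeff m p) ^ 2 := by
      rw [Finset.mul_sum]
      refine Finset.sum_congr rfl fun m _ => ?_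
      rw [MvPolynomial.coeff_C_mul]
      ring
    unfold coeffNorm
    rw [hsupp, hsum, Real.sqrt_mul (by norm_num),
      show Real.sqrt 4 = 2 by
        rw [show (4:ℝ) = 2 ^ 2 by norm_num, Real.sqrt_sq (by norm_num)]]
    exact mul_le_mul_of_nonneg_left hco (by norm_num)
  · intro x hx u hu hdist
    have hcabs : |f x| = 1 := by rcases hf x hx with h | h <;> simp [h]
    have hub : |eval u p| ≤ A * M := (my_eval_abs_le p u hu).trans hS
    have hlip : |eval x p - eval u p| ≤ 1 / 2 := by
      refine le_trans (my_eval_sub_abs_le p hdeg x u (hXs x hx) hu δ hδpos.le hdist) ?_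
      refine le_trans (mul_le_mul_of_nonneg_right hS (by positivity)) hclaim
    have heval : eval u (C 2 * p) = 2 * eval u p := by
      rw [map_mul, MvPolynomial.eval_C]
    have h3 : |eval x p * f x - eval u p * f x| ≤ 1 / 2 := by
      rw [← sub_mul, abs_mul, hcabs, mul_one]
      exact hlip
    have h4 : 1 / 2 ≤ eval u p * f x := by
      have := (abs_le.mp h3).2
      linarith [hptf x hx]
    constructor
    · rw [heval]
      linarith
    · rw [heval]
      have : eval u p * f x ≤ A * M := by
        calc eval u p * f x ≤ |eval u p * f x| := le_abs_self _
          _ = |eval u p| := by rw [abs_mul, hcabs, mul_one]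
          _ ≤ A * M := hub
      calc 2 * eval u p * f x = 2 * (eval u p * f x) := by ring
        _ ≤ 2 * (A * M) := by linarith
        _ = 2 * A * M := by ring
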